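/- For every p : ℕ and every n : ℕ, the little p-Schröder number satisfies the closed form S p n = ∑_{k=0}^{n} Nat.choose (2n-k) k · C p (n-k), where C p m = p^(m+1) · Nat.catalan m is the m-th p-Catalan number. -/

import Mathlib

/-!
Let `P m = p ^ (m + 1) * catalan m` (`pCatalan`) and `T n = ∑_{m ≤ n} C(n + m, 2m) P m`
(`schroderSum`). The column `n ↦ C(n + m, 2m)` has generating function
`X ^ m / (1 - X) ^ (2m + 1)`, so the convolution of columns `i` and `j` is `n ↦ C(n + i + j + 1, 2(i + j) + 1)`. Hence `∑ T a T b` over `a + b = n`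
is `∑ m, C(n + m + 1, 2m + 1) ∑_{i + j = m} P i P j`, which by the Catalan recursion
`P (m + 1) = ∑_{i + j = m} P i P j` and Pascal's rule is `T (n + 1) - T n`. So `T` satisfies the
Schröder recursion, and the sum in the statement is `T n` read backwards.
-/

open Finset PowerSeries

theorem PowerSeries.coeff_X_pow_mul_mk_one_pow {S : Type*} [CommRing S] (k d n : ℕ) :
    coeff n (X ^ k * (PowerSeries.mk 1 : S⟦X⟧) ^ (k + d + 1)) = ((n + d).choose (k + d) : S) := by
  rw [coeff_X_pow_mul', mk_one_pow_eq_mk_choose_add]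
  split_ifs with hkn
  · rw [coeff_mk, show k + d + (n - k) = n + d by omega]
  · rw [Nat.choose_eq_zero_of_lt (by omega), Nat.cast_zero]

theorem Nat.sum_antidiagonal_add_choose_two_mul_mul (i j n : ℕ) :
    ∑ ab ∈ antidiagonal n, (ab.1 + i).choose (2 * i) * (ab.2 + j).choose (2 * j) =
      (n + (i + j) + 1).choose (2 * (i + j) + 1) := by
  have key := congrArg (coeff n) (show
    X ^ i * (PowerSeries.mk 1 : ℤ⟦X⟧) ^ (i + i + 1) * (X ^ j * PowerSeries.mk 1 ^ (j + j + 1)) =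
      X ^ (i + j) * PowerSeries.mk 1 ^ (i + j + (i + j + 1) + 1) by ring)
  rw [coeff_mul] at key
  simp only [coeff_X_pow_mul_mk_one_pow] at key
  rw [two_mul, two_mul, show 2 * (i + j) + 1 = i + j + (i + j + 1) by ring, add_assoc]
  exact_mod_cast key

theorem Finset.sum_range_sum_range_eq_sum_antidiagonal {M : Type*} [AddCommMonoid M] {N : ℕ}
    (f : ℕ → ℕ → M) (hf : ∀ i j, N ≤ i + j → f i j = 0) :
    ∑ i ∈ range N, ∑ j ∈ range N, f i j = ∑ k ∈ range N, ∑ ij ∈ antidiagonal k, f ij.1 ij.2 := by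
  simp_rw [Nat.sum_antidiagonal_eq_sum_range_succ f, sum_range_diag_flip]
  refine sum_congr rfl fun i _ => (sum_subset (range_subset_range.2 (Nat.sub_le N i)) ?_).symm
  intro j _ hj
  exact hf i j (by simp only [mem_range] at hj; omega)

def pCatalan (p m : ℕ) : ℕ := p ^ (m + 1) * catalan m

theorem pCatalan_succ (p m : ℕ) :
    pCatalan p (m + 1) = ∑ ij ∈ antidiagonal m, pCatalan p ij.1 * pCatalan p ij.2 := by
  rw [pCatalan, catalan_succ', mul_sum]
  refine sum_congr rfl fun ⟨i, j⟩ hij => ?_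
  obtain rfl := mem_antidiagonal.1 hij
  simp only [pCatalan]
  ring

def schroderSum (p n : ℕ) : ℕ := ∑ m ∈ range (n + 1), (n + m).choose (2 * m) * pCatalan p m

theorem schroderSum_eq_sum_range {p n N : ℕ} (h : n < N) :
    schroderSum p n = ∑ m ∈ range N, (n + m).choose (2 * m) * pCatalan p m :=
  sum_subset (range_subset_range.2 h) fun m _ hm => by
    rw [Nat.choose_eq_zero_of_lt (by simp only [mem_range] at hm; omega), zero_mul]

theorem schroderSum_succ_eq_add_sum_choose (p n : ℕ) :
    schroderSum p (n + 1) = schroderSum p n +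
      ∑ m ∈ range (n + 1), (n + m + 1).choose (2 * m + 1) * pCatalan p (m + 1) := by
  rw [schroderSum, schroderSum_eq_sum_range (N := n + 1 + 1) (by omega), sum_range_succ' _ (n + 1),
    sum_range_succ' _ (n + 1)]
  simp only [mul_zero, Nat.choose_zero_right]
  rw [add_right_comm, ← sum_add_distrib]
  congr 1
  refine sum_congr rfl fun m _ => ?_
  rw [← add_mul, show n + 1 + (m + 1) = n + m + 1 + 1 by ring,
    show 2 * (m + 1) = 2 * m + 1 + 1 by ring, Nat.choose_succ_succ' (n + m + 1), add_comm,
    show n + (m + 1) = n + m + 1 by ring]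

theorem sum_antidiagonal_schroderSum_mul (p n : ℕ) :
    ∑ ab ∈ antidiagonal n, schroderSum p ab.1 * schroderSum p ab.2 =
      ∑ m ∈ range (n + 1), (n + m + 1).choose (2 * m + 1) * pCatalan p (m + 1) := calc
  _ = ∑ ab ∈ antidiagonal n, ∑ i ∈ range (n + 1), ∑ j ∈ range (n + 1),
        (ab.1 + i).choose (2 * i) * (ab.2 + j).choose (2 * j) * (pCatalan p i * pCatalan p j) := by
    refine sum_congr rfl fun ab hab => ?_
    rw [schroderSum_eq_sum_range (Finset.Nat.antidiagonal.fst_lt hab),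
      schroderSum_eq_sum_range (Finset.Nat.antidiagonal.snd_lt hab), sum_mul_sum]
    exact sum_congr rfl fun i _ => sum_congr rfl fun j _ => by ring
  _ = ∑ i ∈ range (n + 1), ∑ j ∈ range (n + 1),
        (n + (i + j) + 1).choose (2 * (i + j) + 1) * (pCatalan p i * pCatalan p j) := by
    rw [sum_comm]
    refine sum_congr rfl fun i _ => ?_
    rw [sum_comm]
    refine sum_congr rfl fun j _ => ?_
    rw [← sum_mul, Nat.sum_antidiagonal_add_choose_two_mul_mul]
  _ = ∑ m ∈ range (n + 1), ∑ ij ∈ antidiagonal m,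
        (n + m + 1).choose (2 * m + 1) * (pCatalan p ij.1 * pCatalan p ij.2) := by
    rw [sum_range_sum_range_eq_sum_antidiagonal]
    · exact sum_congr rfl fun m _ => sum_congr rfl fun ij hij => by rw [mem_antidiagonal.1 hij]
    · intro i j h
      rw [Nat.choose_eq_zero_of_lt (by omega), zero_mul]
  _ = _ := by simp_rw [← mul_sum, pCatalan_succ]

theorem schroderSum_succ (p n : ℕ) :
    schroderSum p (n + 1) =
      schroderSum p n + ∑ k ∈ range (n + 1), schroderSum p k * schroderSum p (n - k) := by
  rw [schroderSum_succ_eq_add_sum_choose, ← sum_antidiagonal_schroderSum_mul,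
    Nat.sum_antidiagonal_eq_sum_range_succ (fun a b => schroderSum p a * schroderSum p b)]

theorem eq_of_schroder_recurrence {S S' : ℕ → ℕ} (h0 : S 0 = S' 0)
    (hS : ∀ n, S (n + 1) = S n + ∑ k ∈ range (n + 1), S k * S (n - k))
    (hS' : ∀ n, S' (n + 1) = S' n + ∑ k ∈ range (n + 1), S' k * S' (n - k)) (n : ℕ) :
    S n = S' n := by
  induction n using Nat.strong_induction_on with
  | _ n ih =>
    cases n with
    | zero => exact h0
    | succ n =>
      rw [hS, hS', ih n n.lt_add_one]
      congr 1
      refine sum_congr rfl fun k hk => ?_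
      rw [ih k (by simp only [mem_range] at hk; omega), ih (n - k) (by omega)]

theorem sum_range_choose_mul_pCatalan_eq_schroderSum (p n : ℕ) :
    ∑ k ∈ range (n + 1), (2 * n - k).choose k * pCatalan p (n - k) = schroderSum p n := by
  rw [schroderSum, ← sum_range_reflect]
  refine sum_congr rfl fun k hk => ?_
  have hkn : k ≤ n := Nat.lt_succ_iff.1 (mem_range.1 hk)
  rw [show n + 1 - 1 - k = n - k by omega, show n - (n - k) = k by omega,
    show 2 * n - (n - k) = n + k by omega, Nat.choose_symm_of_eq_add (show n + k = n - k + 2 * k by omega)]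

/-- The little `p`-Schröder numbers (defined by `S p 0 = p` and
`S p n = S p (n-1) + ∑_{k=0}^{n-1} S p k · S p (n-1-k)` for `n ≥ 1`) satisfy the closed
form `S p n = ∑_{k=0}^{n} choose (2n-k) k · C p (n-k)`, where
`C p m = p^(m+1) · catalan m` is the `m`-th `p`-Catalan number. -/
theorem stmt9 (p : ℕ) (S : ℕ → ℕ) (hS0 : S 0 = p)
    (hS : ∀ n : ℕ, S (n + 1) = S n + ∑ k ∈ Finset.range (n + 1), S k * S (n - k))
    (n : ℕ) :
    S n = ∑ k ∈ Finset.range (n + 1),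
      Nat.choose (2 * n - k) k * (p ^ (n - k + 1) * catalan (n - k)) := by
  have h0 : schroderSum p 0 = p := by simp [schroderSum, pCatalan]
  rw [eq_of_schroder_recurrence (hS0.trans h0.symm) hS (schroderSum_succ p) n]
  exact (sum_range_choose_mul_pCatalan_eq_schroderSum p n).symm
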